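/- For k < -2, the point Q₃ = (e/2, e/2) with e = k/(k-1) lies on the affine Hessian curve of F_k and is a point of tangency: the line x + y = k/(k-1) is tangent there to the bounded component of the Hessian. Moreover for k < -2 the bounded component of the Hessian lies in the region x + y ≤ k/(k-1), while for -2 < k < 0 it lies in the region x + y ≥ k/(k-1). -/
import Mathlib


/-- The Hessian determinant `det(∂²F_k/∂xᵢ∂xⱼ)` of the translated Hesse cubic
`F_k(x,y,z) = -x³ - y³ - (z-x-y)³ + 3kxy(z-x-y)`, with the second partial
derivatives written out explicitly. -/
def hesseFHessianDet (k x y z : ℝ) : ℝ :=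
  Matrix.det
    !![-6 * x - 6 * (z - x - y) - 6 * k * y,
       -6 * (z - x - y) + 3 * k * (z - x - y) - 3 * k * y - 3 * k * x,
       6 * (z - x - y) + 3 * k * y;
       -6 * (z - x - y) + 3 * k * (z - x - y) - 3 * k * y - 3 * k * x,
       -6 * y - 6 * (z - x - y) - 6 * k * x,
       6 * (z - x - y) + 3 * k * x;
       6 * (z - x - y) + 3 * k * y,
       6 * (z - x - y) + 3 * k * x,
       -6 * (z - x - y)]

/-- The affine Hessian curve of `F_k` in the chart `z = 1`, as a subset of ℝ². -/
def hessianCurve (k : ℝ) : Set (ℝ × ℝ) :=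
  {p : ℝ × ℝ | hesseFHessianDet k p.1 p.2 1 = 0}

/-- The point `Q₃ = (e/2, e/2)` with `e = k/(k-1)`. -/
noncomputable def hesseQ3 (k : ℝ) : ℝ × ℝ := (k / (k - 1) / 2, k / (k - 1) / 2)

/-- The bounded component of the Hessian curve: the connected component of `Q₃`. -/
def hessianBoundedComponent (k : ℝ) : Set (ℝ × ℝ) :=
  connectedComponentIn (hessianCurve k) (hesseQ3 k)

/- Auxiliary polynomials: on the line `x + y = s`, the Hessian curve equation
becomes `(x-y)^2 * hDt k s = hPt k s`. -/
noncomputable def hQ (k s : ℝ) : ℝ := 3*(k+2)^2*s^2 - 12*(2*k+1)*s + 12*k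
noncomputable def hDt (k s : ℝ) : ℝ := (3*k^3+9*k^2-12)*s + 12 - 3*k^3
noncomputable def hPt (k s : ℝ) : ℝ := ((k-1)*s-k) * hQ k s

theorem hKey (k x y : ℝ) :
    2 * hesseFHessianDet k x y 1 = 9*((x-y)^2 * hDt k (x+y) - hPt k (x+y)) := by
  unfold hesseFHessianDet hDt hPt hQ
  rw [Matrix.det_fin_three]
  simp [Matrix.cons_val_zero, Matrix.cons_val_one, Matrix.head_cons]
  ring

theorem hCurveMem (k : ℝ) (p : ℝ × ℝ) :
    p ∈ hessianCurve k ↔ (p.1-p.2)^2 * hDt k (p.1+p.2) = hPt k (p.1+p.2) := by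
  have h := hKey k p.1 p.2
  constructor
  · intro hc
    have hc' : hesseFHessianDet k p.1 p.2 1 = 0 := hc
    rw [hc'] at h; linarith
  · intro he
    show hesseFHessianDet k p.1 p.2 1 = 0
    rw [he] at h; linarith

theorem hke_id (k : ℝ) (h : k - 1 ≠ 0) : (k - 1) * (k / (k - 1)) = k := by
  field_simp

theorem hQe_id (k : ℝ) (h : k - 1 ≠ 0) :
    hQ k (k / (k - 1)) * (k - 1)^2 = 3*k*(k+2)*(k^2-2*k+4) := by
  unfold hQ; field_simp; ring

theorem hDe_id (k : ℝ) (h : k - 1 ≠ 0) : hDt k (k / (k - 1)) = 12*(k^2+k+1) := by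
  unfold hDt; field_simp; ring

/-- If a set agrees on `F` with both a closed set `U` and an open set `V`, then the
connected component in `F` of a point of `F ∩ U` stays in `U`. -/
theorem hClopenSub {α : Type*} [TopologicalSpace α] {F U V : Set α}
    (hU : IsClosed U) (hV : IsOpen V) (hFUV : F ∩ U = F ∩ V)
    {x : α} (hx : x ∈ F) (hxU : x ∈ U) : connectedComponentIn F x ⊆ U := by
  rw [connectedComponentIn_eq_image hx]
  have hUV : (Subtype.val ⁻¹' U : Set F) = Subtype.val ⁻¹' V := by
    ext q
    constructor
    · intro hq
      have : q.val ∈ F ∩ U := ⟨q.2, hq⟩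
      rw [hFUV] at this; exact this.2
    · intro hq
      have : q.val ∈ F ∩ V := ⟨q.2, hq⟩
      rw [← hFUV] at this; exact this.2
  have hclopen : IsClopen (Subtype.val ⁻¹' U : Set F) := by
    constructor
    · exact hU.preimage continuous_subtype_val
    · rw [hUV]; exact hV.preimage continuous_subtype_val
  have hsub : connectedComponent (⟨x, hx⟩ : F) ⊆ Subtype.val ⁻¹' U :=
    hclopen.connectedComponent_subset hxU
  intro z hz
  rcases hz with ⟨q, hq, rfl⟩
  exact hsub hq

set_option maxHeartbeats 2000000 in
/-- For `k < -2`, `Q₃ = (e/2, e/2)` (with `e = k/(k-1)`) lies on the affine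
Hessian curve of `F_k`, and the line `x + y = e` is tangent there to the bounded
component of the Hessian, which lies in the region `x + y ≤ e`; for `-2 < k < 0`
the bounded component lies in the region `x + y ≥ e`. -/
theorem stmt_18 (k : ℝ) :
    (k < -2 →
      hesseQ3 k ∈ hessianCurve k ∧
      Bornology.IsBounded (hessianBoundedComponent k) ∧
      (∀ p ∈ hessianBoundedComponent k, p.1 + p.2 ≤ k / (k - 1)) ∧
      (∀ p ∈ hessianBoundedComponent k, p.1 + p.2 = k / (k - 1) → p = hesseQ3 k)) ∧
    (-2 < k → k < 0 →
      ∀ p ∈ hessianBoundedComponent k, k / (k - 1) ≤ p.1 + p.2) := by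
  obtain ⟨e, he_def⟩ : ∃ e : ℝ, e = k / (k - 1) := ⟨_, rfl⟩
  -- common facts for k < 0
  have common : ∀ (_ : k < 0),
      (hesseQ3 k ∈ hessianCurve k) ∧
      (hessianBoundedComponent k ⊆ {p : ℝ × ℝ | p.1 + p.2 ∈ Set.Icc (0:ℝ) 1}) := by
    intro hk
    have hk1 : k - 1 < 0 := by linarith
    have hk1' : k - 1 ≠ 0 := ne_of_lt hk1
    have hkne : k ≠ 0 := ne_of_lt hk
    have hk2pos : (0:ℝ) < k^2 := by positivity
    have hk3 : k^3 < 0 := by nlinarith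
    have hke : (k - 1) * e = k := by rw [he_def]; exact hke_id k hk1'
    have he0 : 0 < e := by
      rw [he_def, div_pos_iff]; right; constructor <;> linarith
    have he1 : e < 1 := by
      have h : (k-1)*(e-1) = 1 := by linear_combination hke
      nlinarith
    have hPe : hPt k e = 0 := by
      unfold hPt
      have h1 : (k-1)*e - k = 0 := by rw [hke]; ring
      rw [h1, zero_mul]
    have hQ3c : hesseQ3 k ∈ hessianCurve k := by
      rw [hCurveMem]
      have h1 : (hesseQ3 k).1 = k / (k-1) / 2 := rfl
      have h2 : (hesseQ3 k).2 = k / (k-1) / 2 := rfl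
      rw [h1, h2, show k/(k-1)/2 - k/(k-1)/2 = (0:ℝ) by ring,
        show k/(k-1)/2 + k/(k-1)/2 = k/(k-1) by ring, ← he_def, hPe]
      ring
    refine ⟨hQ3c, ?_⟩
    have hno01 : ∀ p ∈ hessianCurve k, p.1 + p.2 ≠ 0 ∧ p.1 + p.2 ≠ 1 := by
      intro p hp
      rw [hCurveMem] at hp
      constructor
      · intro h0
        rw [h0] at hp
        have hD : hDt k 0 = 12 - 3*k^3 := by unfold hDt; ring
        have hP : hPt k 0 = -12*k^2 := by unfold hPt hQ; ring
        rw [hD, hP] at hp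
        have h3 : (0:ℝ) ≤ (p.1-p.2)^2 * (12 - 3*k^3) :=
          mul_nonneg (sq_nonneg _) (by linarith)
        nlinarith
      · intro h1
        rw [h1] at hp
        have hD : hDt k 1 = 9*k^2 := by unfold hDt; ring
        have hP : hPt k 1 = -3*k^2 := by unfold hPt hQ; ring
        rw [hD, hP] at hp
        have h3 : (0:ℝ) ≤ (p.1-p.2)^2 * (9*k^2) :=
          mul_nonneg (sq_nonneg _) (by positivity)
        nlinarith
    have hFUV : hessianCurve k ∩ {p : ℝ × ℝ | p.1 + p.2 ∈ Set.Icc (0:ℝ) 1}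
        = hessianCurve k ∩ {p : ℝ × ℝ | p.1 + p.2 ∈ Set.Ioo (0:ℝ) 1} := by
      ext p
      constructor
      · rintro ⟨hc, hm⟩
        rcases hno01 p hc with ⟨h0, h1⟩
        exact ⟨hc, lt_of_le_of_ne hm.1 (Ne.symm h0), lt_of_le_of_ne hm.2 h1⟩
      · rintro ⟨hc, hm⟩
        exact ⟨hc, le_of_lt hm.1, le_of_lt hm.2⟩
    have hcont : Continuous (fun p : ℝ × ℝ => p.1 + p.2) :=
      continuous_fst.add continuous_snd
    have hUclosed : IsClosed {p : ℝ × ℝ | p.1 + p.2 ∈ Set.Icc (0:ℝ) 1} :=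
      IsClosed.preimage hcont isClosed_Icc
    have hVopen : IsOpen {p : ℝ × ℝ | p.1 + p.2 ∈ Set.Ioo (0:ℝ) 1} :=
      IsOpen.preimage hcont isOpen_Ioo
    have hQ3U : hesseQ3 k ∈ {p : ℝ × ℝ | p.1 + p.2 ∈ Set.Icc (0:ℝ) 1} := by
      show (hesseQ3 k).1 + (hesseQ3 k).2 ∈ Set.Icc (0:ℝ) 1
      have h1 : (hesseQ3 k).1 = k / (k-1) / 2 := rfl
      have h2 : (hesseQ3 k).2 = k / (k-1) / 2 := rfl
      rw [h1, h2, show k/(k-1)/2 + k/(k-1)/2 = k/(k-1) by ring, ← he_def]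
      exact ⟨le_of_lt he0, le_of_lt he1⟩
    exact hClopenSub hUclosed hVopen hFUV hQ3c hQ3U
  constructor
  · -- case k < -2
    intro hk2
    have hk : k < 0 := by linarith
    obtain ⟨hQ3c, hsub⟩ := common hk
    have hk1 : k - 1 < 0 := by linarith
    have hk1' : k - 1 ≠ 0 := ne_of_lt hk1
    have hkne : k ≠ 0 := ne_of_lt hk
    have hk2pos : (0:ℝ) < k^2 := by positivity
    have hk3 : k^3 < 0 := by nlinarith
    have hke : (k - 1) * e = k := by rw [he_def]; exact hke_id k hk1'
    have he0 : 0 < e := by rw [he_def, div_pos_iff]; right; constructor <;> linarith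
    have hdata : ∀ p ∈ hessianBoundedComponent k,
        0 ≤ p.1 + p.2 ∧ p.1 + p.2 ≤ 1 ∧
        (p.1-p.2)^2 * hDt k (p.1+p.2) = hPt k (p.1+p.2) := by
      intro p hp
      have hU := hsub hp
      have hc := connectedComponentIn_subset (hessianCurve k) (hesseQ3 k) hp
      rw [hCurveMem] at hc
      exact ⟨hU.1, hU.2, hc⟩
    have hDtnn : ∀ s : ℝ, 0 ≤ s → s ≤ 1 → 0 ≤ hDt k s := by
      intro s hs0 hs1
      have h : hDt k s = (1-s)*(12-3*k^3) + s*(9*k^2) := by unfold hDt; ring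
      rw [h]
      have h1 : (0:ℝ) ≤ (1-s)*(12-3*k^3) := mul_nonneg (by linarith) (by linarith)
      have h2 : (0:ℝ) ≤ s*(9*k^2) := mul_nonneg hs0 (by positivity)
      linarith
    -- Q(e) > 0
    have hQe : 0 < hQ k e := by
      have h1 : hQ k e * (k-1)^2 = 3*k*(k+2)*(k^2-2*k+4) := by
        rw [he_def]; exact hQe_id k hk1'
      have h2 : 0 < 3*k*(k+2)*(k^2-2*k+4) := by nlinarith [sq_nonneg (k-1)]
      nlinarith [sq_nonneg (k-1)]
    -- main inequality: s ≤ e on the component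
    have hmain : ∀ p ∈ hessianBoundedComponent k, p.1 + p.2 ≤ e := by
      intro p hp
      obtain ⟨hs0, hs1, heq⟩ := hdata p hp
      set s := p.1 + p.2 with hs_def
      by_contra hlt
      push_neg at hlt
      have hw : (k-1)*s < k := by
        have h := mul_lt_mul_of_neg_left hlt hk1
        rw [hke] at h; linarith
      have hQs : 0 < hQ k s := by
        have hid : hQ k s - hQ k e = (s - e) * (3*(k+2)^2*(s+e) - 12*(2*k+1)) := by
          unfold hQ; ring
        have hb : 0 < 3*(k+2)^2*(s+e) - 12*(2*k+1) := by
          have t1 : (0:ℝ) ≤ 3*(k+2)^2*(s+e) :=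
            mul_nonneg (by positivity) (by linarith)
          linarith
        have := mul_pos (sub_pos.mpr hlt) hb
        linarith
      have hPneg : hPt k s < 0 := by
        unfold hPt
        exact mul_neg_of_neg_of_pos (by linarith) hQs
      have hDnn := hDtnn s hs0 hs1
      have := mul_nonneg (sq_nonneg (p.1 - p.2)) hDnn
      rw [heq] at this
      linarith
    have htang : ∀ p ∈ hessianBoundedComponent k, p.1 + p.2 = e → p = hesseQ3 k := by
      intro p hp hpe
      obtain ⟨_, _, heq⟩ := hdata p hp
      have hDe : hDt k e = 12*(k^2+k+1) := by rw [he_def]; exact hDe_id k hk1'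
      have hP0 : hPt k e = 0 := by
        unfold hPt
        have h1 : (k-1)*e - k = 0 := by rw [hke]; ring
        rw [h1, zero_mul]
      rw [hpe, hDe, hP0] at heq
      have hpos : (0:ℝ) < 12*(k^2+k+1) := by nlinarith [sq_nonneg (2*k+1)]
      have hd2 : (p.1 - p.2)^2 = 0 := by
        rcases mul_eq_zero.mp heq with h | h
        · exact h
        · exact absurd h (ne_of_gt hpos)
      have hd0 : p.1 - p.2 = 0 := by
        have := sq_eq_zero_iff.mp hd2
        exact this
      have hx : p.1 = e/2 := by linarith
      have hy : p.2 = e/2 := by linarith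
      have hgoal : hesseQ3 k = (e/2, e/2) := by
        unfold hesseQ3; rw [← he_def]
      rw [hgoal, Prod.ext_iff]
      exact ⟨hx, hy⟩
    -- boundedness
    have hbdd : Bornology.IsBounded (hessianBoundedComponent k) := by
      have ha : (0:ℝ) < 12 - 3*k^3 := by linarith
      have hb : (0:ℝ) < 9*k^2 := by positivity
      have hPpos : (0:ℝ) < 12 - 3*k^3 + 36*k^2 := by linarith
      obtain ⟨C, hC_def⟩ : ∃ C : ℝ,
          C = max ((12 - 3*k^3 + 36*k^2)/(12 - 3*k^3)) ((12 - 3*k^3 + 36*k^2)/(9*k^2)) :=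
        ⟨_, rfl⟩
      have hC0 : 0 ≤ C := by
        rw [hC_def]
        exact le_trans (le_of_lt (div_pos hPpos ha)) (le_max_left _ _)
      have htb : ∀ p ∈ hessianBoundedComponent k, (p.1-p.2)^2 ≤ C := by
        intro p hp
        obtain ⟨hs0, hs1, heq⟩ := hdata p hp
        set s := p.1 + p.2 with hs_def
        have ht0 : 0 ≤ (p.1-p.2)^2 := sq_nonneg _
        have hPle : hPt k s ≤ 12 - 3*k^3 + 36*k^2 := by
          have e3 : (3*k^3+9*k^2-12) * s^3 ≤ 0 :=
            mul_nonpos_of_nonpos_of_nonneg (by nlinarith [sq_nonneg (k+2)]) (by positivity)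
          have hss : s^2 ≤ 1 := by nlinarith
          have e2 : (12-3*k^3-36*k^2)*s^2 ≤ 12-3*k^3 := by
            have t1 : (12-3*k^3-36*k^2)*s^2 ≤ (12-3*k^3)*s^2 := by
              have : (0:ℝ) ≤ 36*k^2*s^2 := by positivity
              nlinarith
            have t2 : (12-3*k^3)*s^2 ≤ 12-3*k^3 := by nlinarith
            linarith
          have e1 : 36*k^2*s ≤ 36*k^2 := by nlinarith
          have e0 : -12*k^2 ≤ 0 := by nlinarith
          have hexp : hPt k s = (3*k^3+9*k^2-12)*s^3 + (12-3*k^3-36*k^2)*s^2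
              + 36*k^2*s + (-12*k^2) := by unfold hPt hQ; ring
          rw [hexp]; linarith
        have hDform : hDt k s = (1-s)*(12-3*k^3) + s*(9*k^2) := by unfold hDt; ring
        rcases le_total (12 - 3*k^3) (9*k^2) with hab | hab
        · have hDge : 12 - 3*k^3 ≤ hDt k s := by rw [hDform]; nlinarith
          have h1 : (p.1-p.2)^2 * (12 - 3*k^3) ≤ 12 - 3*k^3 + 36*k^2 := by
            have := mul_le_mul_of_nonneg_left hDge ht0
            nlinarith
          have h2 : (p.1-p.2)^2 ≤ (12 - 3*k^3 + 36*k^2)/(12 - 3*k^3) := by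
            rw [le_div_iff₀ ha]; linarith
          rw [hC_def]
          exact le_trans h2 (le_max_left _ _)
        · have hDge : 9*k^2 ≤ hDt k s := by rw [hDform]; nlinarith
          have h1 : (p.1-p.2)^2 * (9*k^2) ≤ 12 - 3*k^3 + 36*k^2 := by
            have := mul_le_mul_of_nonneg_left hDge ht0
            nlinarith
          have h2 : (p.1-p.2)^2 ≤ (12 - 3*k^3 + 36*k^2)/(9*k^2) := by
            rw [le_div_iff₀ hb]; linarith
          rw [hC_def]
          exact le_trans h2 (le_max_right _ _)
      have hsubbox : hessianBoundedComponent k ⊆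
          Set.Icc ((-(C+1), -(C+1)) : ℝ × ℝ) ((C+1, C+1) : ℝ × ℝ) := by
        intro p hp
        obtain ⟨hs0, hs1, _⟩ := hdata p hp
        have ht := htb p hp
        have hd1 : p.1 - p.2 ≤ (C+1)/2 + 1/2 := by nlinarith [sq_nonneg (p.1 - p.2 - 1)]
        have hd2 : -((C+1)/2 + 1/2) ≤ p.1 - p.2 := by nlinarith [sq_nonneg (p.1 - p.2 + 1)]
        refine ⟨⟨?_, ?_⟩, ?_, ?_⟩
        · show -(C+1) ≤ p.1; nlinarith
        · show -(C+1) ≤ p.2; nlinarith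
        · show p.1 ≤ C+1; nlinarith
        · show p.2 ≤ C+1; nlinarith
      refine Bornology.IsBounded.subset ?_ hsubbox
      rw [Set.Icc_prod_eq]
      exact (Metric.isBounded_Icc _ _).prod (Metric.isBounded_Icc _ _)
    rw [← he_def]
    exact ⟨hQ3c, hbdd, hmain, htang⟩
  · -- case -2 < k < 0
    intro hk2 hk
    obtain ⟨hQ3c, hsub⟩ := common hk
    have hk1 : k - 1 < 0 := by linarith
    have hk1' : k - 1 ≠ 0 := ne_of_lt hk1
    have hkne : k ≠ 0 := ne_of_lt hk
    have hk2pos : (0:ℝ) < k^2 := by positivity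
    have hk3 : k^3 < 0 := by nlinarith
    have hke : (k - 1) * e = k := by rw [he_def]; exact hke_id k hk1'
    have he0 : 0 < e := by rw [he_def, div_pos_iff]; right; constructor <;> linarith
    intro p hp
    have hU := hsub hp
    have hc := connectedComponentIn_subset (hessianCurve k) (hesseQ3 k) hp
    rw [hCurveMem] at hc
    obtain ⟨hs0, hs1⟩ := hU
    rw [← he_def]
    set s := p.1 + p.2 with hs_def
    by_contra hlt
    push_neg at hlt
    have hw : k < (k-1)*s := by
      have h := mul_lt_mul_of_neg_left hlt hk1
      rw [hke] at h; linarith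
    have hQe : hQ k e < 0 := by
      have h1 : hQ k e * (k-1)^2 = 3*k*(k+2)*(k^2-2*k+4) := by
        rw [he_def]; exact hQe_id k hk1'
      have h2 : 3*k*(k+2)*(k^2-2*k+4) < 0 := by nlinarith [sq_nonneg (k-1)]
      nlinarith [sq_nonneg (k-1)]
    have hQ0 : hQ k 0 < 0 := by unfold hQ; nlinarith
    have hQs : hQ k s < 0 := by
      have hid : (e-s)*(hQ k 0) + s*(hQ k e) - e*(hQ k s) = 3*(k+2)^2 * s * (e-s) * e := by
        unfold hQ; ring
      have h1 : (e-s)*(hQ k 0) < 0 := mul_neg_of_pos_of_neg (by linarith) hQ0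
      have h2 : s*(hQ k e) ≤ 0 := mul_nonpos_of_nonneg_of_nonpos hs0 (le_of_lt hQe)
      have h3 : 0 ≤ 3*(k+2)^2 * s * (e-s) * e := by
        have h4 : (0:ℝ) ≤ 3*(k+2)^2 * s := mul_nonneg (by positivity) hs0
        have h5 : (0:ℝ) ≤ (e-s) * e := mul_nonneg (by linarith) (le_of_lt he0)
        calc (0:ℝ) ≤ (3*(k+2)^2 * s) * ((e-s) * e) := mul_nonneg h4 h5
        _ = 3*(k+2)^2 * s * (e-s) * e := by ring
      have h5 : e * hQ k s < 0 := by nlinarith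
      nlinarith
    have hPneg : hPt k s < 0 := by
      unfold hPt
      exact mul_neg_of_pos_of_neg (by linarith) hQs
    have hDnn : 0 ≤ hDt k s := by
      have h : hDt k s = (1-s)*(12-3*k^3) + s*(9*k^2) := by unfold hDt; ring
      rw [h]
      have h1 : (0:ℝ) ≤ (1-s)*(12-3*k^3) := mul_nonneg (by linarith) (by linarith)
      have h2 : (0:ℝ) ≤ s*(9*k^2) := mul_nonneg hs0 (by positivity)
      linarith
    have := mul_nonneg (sq_nonneg (p.1 - p.2)) hDnn
    rw [hc] at this
    linarith
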